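/- arXiv:1904.10072 — 2 statements merged into one kernel-verified Lean document; each statement's English description precedes it below -/
import Mathlib

section
/- For every w ∈ F₂' there exist a₁, b₁, a₂, b₂ ∈ F₂ such that w·([a₁,b₁]·[a₂,b₂])⁻¹ ∈ F₂''. In other words, every element of the derived subgroup of the free metabelian group M₂ = F₂/F₂'' is a product of two commutators. (Bavard–Meigniez.) -/
open scoped commutatorElement

/-! In a metabelian group `H` generated by `X` and `Y`, with `H' = commutator H`:

* `⁅H', H⁆` consists exactly of the products `⁅X, a⁆ * ⁅Y, b⁆` with `a, b ∈ H'`; in the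
  `ℤ[H/H']`-module `H'` this is `(x - 1) H' + (y - 1) H'`, and the key point is that
  `⁅X ^ m, k⁆` lies in `⁅X, H'⁆` because `x ^ m - 1` is divisible by `x - 1`;
* modulo `⁅H', H⁆` the image of `⁅X, Y⁆` is central, so `H'` is generated by it, and
  `⁅X ^ e, Y⁆ ≡ ⁅X, Y⁆ ^ e`.

Hence every `w ∈ H'` is `⁅X ^ e, Y⁆ * ⁅X, a⁆ * ⁅Y, b⁆`, and
`⁅X ^ e, Y⁆ * ⁅Y, b⁆ = ⁅b⁻¹ * X ^ e, Y⁆` because conjugation by `b ∈ H'` is trivial on `H'`.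
Apply this to `F₂ ⧸ F₂''`. -/

section Group

variable {G : Type*} [Group G]

theorem commutatorElement_mem_commutator (a b : G) : ⁅a, b⁆ ∈ commutator G :=
  Subgroup.commutator_mem_commutator (Subgroup.mem_top a) (Subgroup.mem_top b)

theorem commutatorElement_zpow_left_of_commute {x y : G} (h : Commute x ⁅x, y⁆) (n : ℤ) :
    ⁅x ^ n, y⁆ = ⁅x, y⁆ ^ n := by
  have hconj : y * x⁻¹ * y⁻¹ = x⁻¹ * ⁅x, y⁆ := by rw [commutatorElement_def]; group
  calc ⁅x ^ n, y⁆ = x ^ n * (y * x⁻¹ * y⁻¹) ^ n := by rw [conj_zpow, commutatorElement_def]; group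
    _ = ⁅x, y⁆ ^ n := by rw [hconj, h.inv_left.mul_zpow, inv_zpow, mul_inv_cancel_left]

theorem commutator_le_of_closure_pair_eq_top {X Y : G} (hXY : Subgroup.closure {X, Y} = ⊤)
    (N : Subgroup G) [N.Normal] (hN : ⁅X, Y⁆ ∈ N) : commutator G ≤ N := by
  rw [← Subgroup.Normal.quotient_commutative_iff_commutator_le]
  set π := QuotientGroup.mk' N
  have hπ : π X * π Y = π Y * π X := by
    rw [← commutatorElement_eq_one_iff_mul_comm, ← map_commutatorElement, QuotientGroup.mk'_apply,
      QuotientGroup.eq_one_iff]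
    exact hN
  have : IsMulCommutative (Subgroup.closure {π X, π Y}) := Subgroup.isMulCommutative_closure (by
    simp only [Set.mem_insert_iff, Set.mem_singleton_iff]
    rintro a (rfl | rfl) b (rfl | rfl) <;> first | rfl | exact hπ | exact hπ.symm)
  have htop : Subgroup.closure {π X, π Y} = ⊤ := by
    rw [← Set.image_pair, ← MonoidHom.map_closure, hXY, ← MonoidHom.range_eq_map,
      MonoidHom.range_eq_top]
    exact QuotientGroup.mk'_surjective N
  have hmem (a : G ⧸ N) : a ∈ Subgroup.closure {π X, π Y} := htop ▸ Subgroup.mem_top a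
  exact ⟨⟨fun a b ↦ setLike_mul_comm (hmem a) (hmem b)⟩⟩

theorem exists_commutatorElement_zpow_inv_mul_mem {X Y : G} (hXY : Subgroup.closure {X, Y} = ⊤)
    {w : G} (hw : w ∈ commutator G) :
    ∃ e : ℤ, ⁅X ^ e, Y⁆⁻¹ * w ∈ ⁅commutator G, (⊤ : Subgroup G)⁆ := by
  set π := QuotientGroup.mk' ⁅commutator G, (⊤ : Subgroup G)⁆
  have hcentral : ∀ k ∈ commutator G, ∀ g, Commute (π g) (π k) := fun k hk g ↦ by
    rw [commute_iff_eq, ← commutatorElement_eq_one_iff_mul_comm, ← map_commutatorElement,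
      QuotientGroup.mk'_apply, QuotientGroup.eq_one_iff, ← commutatorElement_inv]
    exact inv_mem (Subgroup.commutator_mem_commutator hk (Subgroup.mem_top g))
  have hc := commutatorElement_mem_commutator X Y
  set S := (Subgroup.zpowers (π ⁅X, Y⁆)).comap π
  have : S.Normal := ⟨fun n hn g ↦ by
    obtain ⟨k, hk⟩ := Subgroup.mem_zpowers_iff.mp (Subgroup.mem_comap.mp hn)
    rw [Subgroup.mem_comap, map_mul, map_mul, map_inv, ← hk,
      ((hcentral _ hc g).zpow_right k).mul_inv_cancel]
    exact zpow_mem (Subgroup.mem_zpowers _) k⟩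
  have hcS : ⁅X, Y⁆ ∈ S := Subgroup.mem_comap.mpr (Subgroup.mem_zpowers _)
  obtain ⟨e, he⟩ := Subgroup.mem_zpowers_iff.mp <| Subgroup.mem_comap.mp <|
    commutator_le_of_closure_pair_eq_top hXY S hcS hw
  have hX : Commute (π X) ⁅π X, π Y⁆ := map_commutatorElement π X Y ▸ hcentral _ hc X
  refine ⟨e, (QuotientGroup.eq (s := ⁅commutator G, (⊤ : Subgroup G)⁆)).mp ?_⟩
  change π ⁅X ^ e, Y⁆ = π w
  rw [map_commutatorElement, map_zpow, commutatorElement_zpow_left_of_commute hX, ← he,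
    map_commutatorElement]

theorem exists_zpow_mul_zpow_inv_mul_mem_commutator {X Y : G}
    (hXY : Subgroup.closure {X, Y} = ⊤) (g : G) :
    ∃ m n : ℤ, (X ^ m * Y ^ n)⁻¹ * g ∈ commutator G := by
  have hg :
      Abelianization.of g ∈ Subgroup.closure {Abelianization.of X, Abelianization.of Y} := by
    rw [← Set.image_pair, ← MonoidHom.map_closure, hXY]
    exact Subgroup.mem_map_of_mem _ (Subgroup.mem_top g)
  obtain ⟨m, n, hmn⟩ := Subgroup.mem_closure_pair.mp hg
  refine ⟨m, n, ?_⟩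
  rw [← Abelianization.ker_of, MonoidHom.mem_ker, map_mul, map_inv, map_mul, map_zpow, map_zpow,
    hmn, inv_mul_cancel]

theorem commutatorElement_mul_left_eq_commutatorElement_conj_mul (a b c : G) :
    ⁅a * b, c⁆ = ⁅a, b * c * b⁻¹⁆ * ⁅b, c⁆ := by
  simp only [commutatorElement_def]; group

end Group

section Metabelian

variable {H : Type*} [Group H] [IsMulCommutative (commutator H)]

theorem mul_mul_inv_eq_of_mem_commutator {u k : H} (hu : u ∈ commutator H)
    (hk : k ∈ commutator H) : u * k * u⁻¹ = k := by
  rw [setLike_mul_comm hu hk, mul_inv_cancel_right]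

theorem commutatorElement_mul_right_of_mem_commutator (g : H) {u : H} (hu : u ∈ commutator H)
    (v : H) : ⁅g, u * v⁆ = ⁅g, u⁆ * ⁅g, v⁆ := by
  rw [commutatorElement_mul_right_eq_mul_conj, mul_assoc ⁅g, u⁆ u, mul_assoc ⁅g, u⁆,
    mul_mul_inv_eq_of_mem_commutator hu (commutatorElement_mem_commutator g v)]

theorem commutatorElement_inv_right_of_mem_commutator (g : H) {u : H} (hu : u ∈ commutator H) :
    ⁅g, u⁻¹⁆ = ⁅g, u⁆⁻¹ :=
  eq_inv_of_mul_eq_one_right <| by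
    rw [← commutatorElement_mul_right_of_mem_commutator g hu u⁻¹, mul_inv_cancel,
      commutatorElement_one_right]

theorem exists_commutatorElement_zpow_left_eq (g : H) (m : ℤ) {k : H} (hk : k ∈ commutator H) :
    ∃ v ∈ commutator H, ⁅g ^ m, k⁆ = ⁅g, v⁆ := by
  have hconj (n : ℤ) : g ^ n * k * (g ^ n)⁻¹ ∈ commutator H :=
    (inferInstance : (commutator H).Normal).conj_mem k hk _
  induction m using Int.induction_on with
  | zero => exact ⟨1, one_mem _, by simp⟩
  | succ n ih =>
    obtain ⟨v, hv, hgv⟩ := ih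
    refine ⟨_, mul_mem (hconj n) hv, ?_⟩
    rw [add_comm, zpow_one_add, commutatorElement_mul_left_eq_commutatorElement_conj_mul, hgv,
      commutatorElement_mul_right_of_mem_commutator g (hconj n) v]
  | pred n ih =>
    obtain ⟨v, hv, hgv⟩ := ih
    refine ⟨_, mul_mem (inv_mem (hconj (-(n : ℤ) - 1))) hv, ?_⟩
    have := commutatorElement_mul_left_eq_commutatorElement_conj_mul g (g ^ (-(n : ℤ) - 1)) k
    rw [← zpow_one_add, show 1 + (-(n : ℤ) - 1) = -n by ring, hgv] at this
    rw [commutatorElement_mul_right_of_mem_commutator g (inv_mem (hconj _)) v,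
      commutatorElement_inv_right_of_mem_commutator g (hconj _), this, inv_mul_cancel_left]

theorem commutatorElement_inv_mul_left_of_mem_commutator {b : H} (hb : b ∈ commutator H)
    (p Y : H) : ⁅b⁻¹ * p, Y⁆ = ⁅p, Y⁆ * ⁅Y, b⁆ := by
  have hconj :=
    mul_mul_inv_eq_of_mem_commutator (inv_mem hb) (commutatorElement_mem_commutator Y b)
  rw [inv_inv] at hconj
  rw [commutatorElement_mul_left_eq_conj_mul,
    mul_mul_inv_eq_of_mem_commutator (inv_mem hb) (commutatorElement_mem_commutator p Y),
    commutatorElement_inv_left, hconj]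

theorem commutatorElement_mul_left_of_mem_commutator (g : H) {s k : H} (hs : s ∈ commutator H)
    (hk : k ∈ commutator H) : ⁅g * s, k⁆ = ⁅g, k⁆ := by
  rw [commutatorElement_mul_left_eq_conj_mul,
    commutatorElement_eq_one_iff_mul_comm.mpr (setLike_mul_comm hs hk), mul_one, mul_inv_cancel,
    one_mul]

def pairCommutators (X Y : H) : Subgroup H where
  carrier := {t | ∃ a ∈ commutator H, ∃ b ∈ commutator H, ⁅X, a⁆ * ⁅Y, b⁆ = t}
  one_mem' := ⟨1, one_mem _, 1, one_mem _, by simp⟩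
  mul_mem' := by
    rintro _ _ ⟨a, ha, b, hb, rfl⟩ ⟨a', ha', b', hb', rfl⟩
    refine ⟨a * a', mul_mem ha ha', b * b', mul_mem hb hb', ?_⟩
    rw [commutatorElement_mul_right_of_mem_commutator X ha,
      commutatorElement_mul_right_of_mem_commutator Y hb, mul_assoc, mul_assoc,
      ← mul_assoc ⁅X, a'⁆, ← mul_assoc ⁅Y, b⁆,
      setLike_mul_comm (commutatorElement_mem_commutator X a')
        (commutatorElement_mem_commutator Y b)]
  inv_mem' := by
    rintro _ ⟨a, ha, b, hb, rfl⟩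
    refine ⟨a⁻¹, inv_mem ha, b⁻¹, inv_mem hb, ?_⟩
    rw [commutatorElement_inv_right_of_mem_commutator X ha,
      commutatorElement_inv_right_of_mem_commutator Y hb, ← mul_inv_rev,
      setLike_mul_comm (commutatorElement_mem_commutator Y b)
        (commutatorElement_mem_commutator X a)]

theorem commutator_commutator_top_le_pairCommutators {X Y : H}
    (hXY : Subgroup.closure {X, Y} = ⊤) :
    ⁅commutator H, (⊤ : Subgroup H)⁆ ≤ pairCommutators X Y := by
  rw [Subgroup.commutator_le]
  intro k hk g _
  obtain ⟨m, n, hs⟩ := exists_zpow_mul_zpow_inv_mul_mem_commutator hXY g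
  have hYk : Y ^ n * k⁻¹ * (Y ^ n)⁻¹ ∈ commutator H :=
    (inferInstance : (commutator H).Normal).conj_mem _ (inv_mem hk) _
  obtain ⟨a, ha, hXa⟩ := exists_commutatorElement_zpow_left_eq X m hYk
  obtain ⟨b, hb, hYb⟩ := exists_commutatorElement_zpow_left_eq Y n (inv_mem hk)
  refine ⟨a, ha, b, hb, ?_⟩
  calc ⁅X, a⁆ * ⁅Y, b⁆ = ⁅X ^ m * Y ^ n, k⁻¹⁆ := by
        rw [commutatorElement_mul_left_eq_commutatorElement_conj_mul, hXa, hYb]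
    _ = ⁅X ^ m * Y ^ n * ((X ^ m * Y ^ n)⁻¹ * g), k⁻¹⁆ :=
        (commutatorElement_mul_left_of_mem_commutator _ hs (inv_mem hk)).symm
    _ = ⁅k, g⁆ := by
        rw [mul_inv_cancel_left, commutatorElement_inv_right_of_mem_commutator g hk,
          commutatorElement_inv]

theorem exists_eq_commutatorElement_mul_commutatorElement {X Y : H}
    (hXY : Subgroup.closure {X, Y} = ⊤) {w : H} (hw : w ∈ commutator H) :
    ∃ a b : H, w = ⁅X, a⁆ * ⁅b, Y⁆ := by
  obtain ⟨e, he⟩ := exists_commutatorElement_zpow_inv_mul_mem hXY hw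
  obtain ⟨a, -, b, hb, hab⟩ := commutator_commutator_top_le_pairCommutators hXY he
  refine ⟨a, b⁻¹ * X ^ e, ?_⟩
  rw [commutatorElement_inv_mul_left_of_mem_commutator hb, ← mul_assoc,
    setLike_mul_comm (commutatorElement_mem_commutator X a)
      (commutatorElement_mem_commutator _ Y),
    mul_assoc, hab, mul_inv_cancel_left]

end Metabelian

instance isMulCommutative_commutator_quotient_derivedSeries_two (G : Type*) [Group G] :
    IsMulCommutative (commutator (G ⧸ derivedSeries G 2)) := by
  have hsurj := QuotientGroup.mk'_surjective (derivedSeries G 2)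
  refine IsMulCommutative.of_setLike_mul_comm ?_
  rw [← derivedSeries_one, ← map_derivedSeries_eq hsurj, derivedSeries_one]
  rintro _ ⟨a, ha, rfl⟩ _ ⟨b, hb, rfl⟩
  rw [← commutatorElement_eq_one_iff_mul_comm, ← map_commutatorElement, QuotientGroup.mk'_apply,
    QuotientGroup.eq_one_iff, derivedSeries_succ, derivedSeries_one]
  exact Subgroup.commutator_mem_commutator ha hb

theorem stmt_10 (w : FreeGroup (Fin 2)) (hw : w ∈ commutator (FreeGroup (Fin 2))) :
    ∃ a₁ b₁ a₂ b₂ : FreeGroup (Fin 2),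
      w * (⁅a₁, b₁⁆ * ⁅a₂, b₂⁆)⁻¹ ∈ derivedSeries (FreeGroup (Fin 2)) 2 := by
  set π := QuotientGroup.mk' (derivedSeries (FreeGroup (Fin 2)) 2)
  have hsurj : Function.Surjective π := QuotientGroup.mk'_surjective _
  have hgen : Subgroup.closure {π (.of 0), π (.of 1)} = ⊤ := by
    rw [← Set.image_pair, ← MonoidHom.map_closure,
      show ({.of 0, .of 1} : Set (FreeGroup (Fin 2))) = Set.range .of by
        ext; simp [Fin.exists_fin_two, eq_comm],
      FreeGroup.closure_range_of, ← MonoidHom.range_eq_map, MonoidHom.range_eq_top]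
    exact hsurj
  have hπw : π w ∈ commutator _ := by
    rw [← derivedSeries_one, ← map_derivedSeries_eq hsurj]
    exact Subgroup.mem_map_of_mem π hw
  obtain ⟨a, b, hab⟩ := exists_eq_commutatorElement_mul_commutatorElement hgen hπw
  obtain ⟨a, rfl⟩ := hsurj a
  obtain ⟨b, rfl⟩ := hsurj b
  refine ⟨.of 0, a, b, .of 1, ?_⟩
  rw [← QuotientGroup.eq_one_iff, ← QuotientGroup.mk'_apply, map_mul, map_inv, map_mul,
    map_commutatorElement, map_commutatorElement, ← hab, mul_inv_cancel]
end

section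
/- Let f : F₂' → ℤ be a signed-area homomorphism. Let n ≥ 2 and let z ∈ F₂' be a product of n-th powers in F₂, i.e. z = u₁^n u₂^n ⋯ u_s^n for some s ≥ 1 and u₁, …, u_s ∈ F₂. If n is odd then n divides f(z); if n is even then n/2 divides f(z). -/
/-!
Send `x, y` to the generators `⟨1, 0, 0⟩, ⟨0, 1, 0⟩` of the integral Heisenberg group. This maps
`F₂'` into the centre, so the central coordinate restricts to a homomorphism on `F₂'`, and it maps
`[x, y]` to `⟨0, 0, 1⟩`; as `F₂'` is the normal closure of `[x, y]`, it is the only signed-area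
homomorphism. Since `⟨a, b, c⟩ ^ n = ⟨n a, n b, n c + C(n, 2) a b⟩`, every `n`-th power dies in
the Heisenberg group over `ZMod k` whenever `k ∣ n` and `k ∣ C(n, 2)`, so `k` divides the area of
a product of `n`-th powers. Take `k = n` for odd `n` and `k = n / 2` for even `n`.
-/

open scoped commutatorElement

namespace Nat

theorem dvd_choose_two_of_odd {n : ℕ} (hn : Odd n) : n ∣ n.choose 2 := by
  obtain ⟨m, rfl⟩ := hn
  refine ⟨m, ?_⟩
  rw [choose_two_right, Nat.add_sub_cancel, mul_left_comm, Nat.mul_div_cancel_left _ two_pos]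

theorem div_two_dvd_choose_two (n : ℕ) : n / 2 ∣ n.choose 2 := by
  obtain ⟨m, rfl | rfl⟩ := n.even_or_odd'
  · refine ⟨2 * m - 1, ?_⟩
    rw [choose_two_right, Nat.mul_div_cancel_left _ two_pos, mul_assoc,
      Nat.mul_div_cancel_left _ two_pos]
  · refine ⟨2 * m + 1, ?_⟩
    rw [choose_two_right, Nat.add_sub_cancel, mul_left_comm, Nat.mul_div_cancel_left _ two_pos,
      show (2 * m + 1) / 2 = m by omega, mul_comm]

end Nat

theorem Subgroup.commutator_le_of_closure_eq_top {G : Type*} [Group G] {s : Set G}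
    (hs : closure s = ⊤) {N : Subgroup G} [N.Normal] (h : ∀ a ∈ s, ∀ b ∈ s, ⁅a, b⁆ ∈ N) :
    _root_.commutator G ≤ N := by
  rw [← Subgroup.Normal.quotient_commutative_iff_commutator_le]
  let π := QuotientGroup.mk' N
  have hcomm : ∀ p ∈ π '' s, ∀ q ∈ π '' s, p * q = q * p := by
    rintro _ ⟨a, ha, rfl⟩ _ ⟨b, hb, rfl⟩
    rw [← commutatorElement_eq_one_iff_mul_comm, ← map_commutatorElement, QuotientGroup.mk'_apply,
      QuotientGroup.eq_one_iff]
    exact h a ha b hb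
  have htop : closure (π '' s) = ⊤ := by
    rw [← MonoidHom.map_closure, hs, map_top_of_surjective _ (QuotientGroup.mk'_surjective N)]
  have hcomm_top := isMulCommutative_closure hcomm
  rw [htop] at hcomm_top
  exact ⟨⟨fun p q => congrArg Subtype.val <|
    hcomm_top.is_comm.comm (⟨p, trivial⟩ : (⊤ : Subgroup _)) ⟨q, trivial⟩⟩⟩

theorem MonoidHom.eq_of_eqOn_conjugatesOfSet {G M : Type*} [Group G] [Monoid M] {s : Set G}
    {H : Subgroup G} (hH : H = Subgroup.normalClosure s) {f g : H →* M}
    (h : ∀ x : H, (x : G) ∈ Group.conjugatesOfSet s → f x = g x) : f = g := by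
  subst hH
  exact MonoidHom.eq_of_eqOn_dense Subgroup.closure_closure_coe_preimage h

theorem FreeGroup.commutator_eq_normalClosure_commutator_of :
    commutator (FreeGroup (Fin 2)) = Subgroup.normalClosure {⁅of (0 : Fin 2), of 1⁆} := by
  refine le_antisymm (Subgroup.commutator_le_of_closure_eq_top (closure_range_of _) ?_) ?_
  · rintro _ ⟨i, rfl⟩ _ ⟨j, rfl⟩
    have hmem : ⁅of (0 : Fin 2), of (1 : Fin 2)⁆ ∈
        Subgroup.normalClosure {⁅of (0 : Fin 2), of 1⁆} :=
      Subgroup.subset_normalClosure rfl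
    fin_cases i <;> fin_cases j
    · simp
    · exact hmem
    · rw [← commutatorElement_inv]
      exact inv_mem hmem
    · simp
  · refine Subgroup.normalClosure_le_normal ?_
    rintro _ rfl
    exact Subgroup.commutator_mem_commutator (Subgroup.mem_top _) (Subgroup.mem_top _)

/-- `⟨a, b, c⟩` is the unitriangular matrix `[[1, a, c], [0, 1, b], [0, 0, 1]]`. -/
@[ext]
structure Heisenberg (R : Type*) [CommRing R] where
  a : R
  b : R
  c : R

namespace Heisenberg

variable {R S : Type*} [CommRing R] [CommRing S]

instance : Mul (Heisenberg R) := ⟨fun g h => ⟨g.a + h.a, g.b + h.b, g.c + h.c + g.a * h.b⟩⟩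
instance : One (Heisenberg R) := ⟨⟨0, 0, 0⟩⟩
instance : Inv (Heisenberg R) := ⟨fun g => ⟨-g.a, -g.b, -g.c + g.a * g.b⟩⟩

@[simp] lemma mul_a (g h : Heisenberg R) : (g * h).a = g.a + h.a := rfl
@[simp] lemma mul_b (g h : Heisenberg R) : (g * h).b = g.b + h.b := rfl
@[simp] lemma mul_c (g h : Heisenberg R) : (g * h).c = g.c + h.c + g.a * h.b := rfl
@[simp] lemma one_a : (1 : Heisenberg R).a = 0 := rfl
@[simp] lemma one_b : (1 : Heisenberg R).b = 0 := rfl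
@[simp] lemma one_c : (1 : Heisenberg R).c = 0 := rfl
@[simp] lemma inv_a (g : Heisenberg R) : g⁻¹.a = -g.a := rfl
@[simp] lemma inv_b (g : Heisenberg R) : g⁻¹.b = -g.b := rfl
@[simp] lemma inv_c (g : Heisenberg R) : g⁻¹.c = -g.c + g.a * g.b := rfl

instance : Group (Heisenberg R) where
  mul_assoc g h k := by ext <;> simp <;> ring
  one_mul g := by ext <;> simp
  mul_one g := by ext <;> simp
  inv_mul_cancel g := by ext <;> simp

theorem pow_eq (g : Heisenberg R) (n : ℕ) :
    g ^ n = ⟨n * g.a, n * g.b, n * g.c + n.choose 2 * (g.a * g.b)⟩ := by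
  induction n with
  | zero => ext <;> simp
  | succ m ih =>
    rw [pow_succ, ih]
    ext <;> simp [Nat.choose_succ_succ] <;> ring

theorem pow_eq_one_of_natCast_eq_zero (g : Heisenberg R) {n : ℕ} (hn : (n : R) = 0)
    (hn₂ : (n.choose 2 : R) = 0) : g ^ n = 1 := by
  ext <;> simp [pow_eq, hn, hn₂]

theorem mul_central_mul_inv (g : Heisenberg R) (t : R) : g * ⟨0, 0, t⟩ * g⁻¹ = ⟨0, 0, t⟩ := by
  ext <;> simp
  ring

def fstHom : Heisenberg R →* Multiplicative R where
  toFun g := .ofAdd g.a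
  map_one' := rfl
  map_mul' _ _ := rfl

def map (σ : R →+* S) : Heisenberg R →* Heisenberg S where
  toFun g := ⟨σ g.a, σ g.b, σ g.c⟩
  map_one' := by ext <;> simp
  map_mul' g h := by ext <;> simp

@[simp] lemma map_c (σ : R →+* S) (g : Heisenberg R) : (map σ g).c = σ g.c := rfl

end Heisenberg

namespace FreeGroup

noncomputable def toHeisenberg (R : Type*) [CommRing R] : FreeGroup (Fin 2) →* Heisenberg R :=
  lift ![⟨1, 0, 0⟩, ⟨0, 1, 0⟩]

variable {R S : Type*} [CommRing R] [CommRing S]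

theorem toHeisenberg_commutator :
    toHeisenberg R ⁅of (0 : Fin 2), of 1⁆ = ⟨0, 0, 1⟩ := by
  ext <;> simp [toHeisenberg, commutatorElement_def]

theorem map_comp_toHeisenberg (σ : R →+* S) :
    (Heisenberg.map σ).comp (toHeisenberg R) = toHeisenberg S := by
  ext i <;> fin_cases i <;> simp [toHeisenberg, Heisenberg.map]

theorem toHeisenberg_a_eq_zero {w : FreeGroup (Fin 2)}
    (hw : w ∈ commutator (FreeGroup (Fin 2))) : (toHeisenberg R w).a = 0 :=
  congrArg Multiplicative.toAdd <|
    Abelianization.commutator_subset_ker (Heisenberg.fstHom.comp (toHeisenberg R)) hw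

noncomputable def signedArea : commutator (FreeGroup (Fin 2)) →* Multiplicative ℤ where
  toFun w := .ofAdd (toHeisenberg ℤ w).c
  map_one' := by simp
  map_mul' v w := by simp [toHeisenberg_a_eq_zero v.2, ofAdd_add]

theorem signedArea_eq_one_of_eq_conj (w : commutator (FreeGroup (Fin 2))) (u : FreeGroup (Fin 2))
    (hw : (w : FreeGroup (Fin 2)) = u * ⁅of (0 : Fin 2), of 1⁆ * u⁻¹) :
    signedArea w = .ofAdd 1 := by
  rw [signedArea, MonoidHom.coe_mk, OneHom.coe_mk, hw, _root_.map_mul, _root_.map_mul,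
    _root_.map_inv, toHeisenberg_commutator, Heisenberg.mul_central_mul_inv]

theorem eq_signedArea (f : commutator (FreeGroup (Fin 2)) →* Multiplicative ℤ)
    (hf : ∀ (u : FreeGroup (Fin 2)) (w : commutator (FreeGroup (Fin 2))),
      (w : FreeGroup (Fin 2)) = u * ⁅of (0 : Fin 2), of 1⁆ * u⁻¹ → f w = .ofAdd 1) :
    f = signedArea := by
  refine MonoidHom.eq_of_eqOn_conjugatesOfSet commutator_eq_normalClosure_commutator_of
    fun w hw => ?_
  obtain ⟨_, rfl, hconj⟩ := Group.mem_conjugatesOfSet_iff.mp hw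
  obtain ⟨u, hu⟩ := isConj_iff.mp hconj
  rw [hf u w hu.symm, signedArea_eq_one_of_eq_conj w u hu.symm]

theorem dvd_signedArea_of_eq_prod_pow {k n : ℕ} (hkn : k ∣ n) (hk : k ∣ n.choose 2)
    {z : commutator (FreeGroup (Fin 2))} {L : List (FreeGroup (Fin 2))}
    (hz : (z : FreeGroup (Fin 2)) = (L.map (· ^ n)).prod) :
    (k : ℤ) ∣ (signedArea z).toAdd := by
  have hz₁ : toHeisenberg (ZMod k) z = 1 := by
    rw [hz, map_list_prod, List.map_map]
    refine List.prod_eq_one fun g hg => ?_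
    obtain ⟨u, -, rfl⟩ := List.mem_map.mp hg
    exact (map_pow _ u n).trans <| Heisenberg.pow_eq_one_of_natCast_eq_zero _
      ((ZMod.natCast_eq_zero_iff _ _).2 hkn) ((ZMod.natCast_eq_zero_iff _ _).2 hk)
  rw [← map_comp_toHeisenberg (Int.castRingHom (ZMod k))] at hz₁
  have hc := congrArg Heisenberg.c hz₁
  simp only [MonoidHom.coe_comp, Function.comp_apply, Heisenberg.map_c, eq_intCast,
    Heisenberg.one_c] at hc
  exact (ZMod.intCast_zmod_eq_zero_iff_dvd _ _).1 hc

end FreeGroup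

theorem stmt_13_general
    (f : ↥(commutator (FreeGroup (Fin 2))) →* Multiplicative ℤ)
    (hf : ∀ (u : FreeGroup (Fin 2)) (w : ↥(commutator (FreeGroup (Fin 2)))),
      (w : FreeGroup (Fin 2)) =
          u * ⁅FreeGroup.of (0 : Fin 2), FreeGroup.of (1 : Fin 2)⁆ * u⁻¹ →
      f w = Multiplicative.ofAdd (1 : ℤ))
    (n : ℕ)
    (z : ↥(commutator (FreeGroup (Fin 2))))
    (L : List (FreeGroup (Fin 2)))
    (hz : (z : FreeGroup (Fin 2)) = (L.map (fun u => u ^ n)).prod) :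
    (Odd n → (n : ℤ) ∣ Multiplicative.toAdd (f z)) ∧
    (Even n → ((n / 2 : ℕ) : ℤ) ∣ Multiplicative.toAdd (f z)) := by
  rw [FreeGroup.eq_signedArea f hf]
  exact ⟨fun hn => FreeGroup.dvd_signedArea_of_eq_prod_pow dvd_rfl
      (Nat.dvd_choose_two_of_odd hn) hz,
    fun hn => FreeGroup.dvd_signedArea_of_eq_prod_pow (Nat.div_dvd_of_dvd hn.two_dvd)
      (Nat.div_two_dvd_choose_two n) hz⟩

theorem stmt_13
    (f : ↥(commutator (FreeGroup (Fin 2))) →* Multiplicative ℤ)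
    (hf : ∀ (u : FreeGroup (Fin 2)) (w : ↥(commutator (FreeGroup (Fin 2)))),
      (w : FreeGroup (Fin 2)) =
          u * ⁅FreeGroup.of (0 : Fin 2), FreeGroup.of (1 : Fin 2)⁆ * u⁻¹ →
      f w = Multiplicative.ofAdd (1 : ℤ))
    (n : ℕ) (hn : 2 ≤ n)
    (z : ↥(commutator (FreeGroup (Fin 2))))
    (L : List (FreeGroup (Fin 2))) (hL : L ≠ [])
    (hz : (z : FreeGroup (Fin 2)) = (L.map (fun u => u ^ n)).prod) :
    (Odd n → (n : ℤ) ∣ Multiplicative.toAdd (f z)) ∧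
    (Even n → ((n / 2 : ℕ) : ℤ) ∣ Multiplicative.toAdd (f z)) :=
  stmt_13_general f hf n z L hz
end
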